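/- arXiv:1102.2883 — 2 statements merged into one kernel-verified Lean document; each statement's English description precedes it below -/
import Mathlib

section
/- For every κ ∈ ℤ_{>0} ∪ {∞}, the function H^max_κ is strictly concave on its domain (the interval [0,κ] for finite κ, and [0,∞) for κ = ∞): for all x ≠ y in the domain and α,β > 0 with α+β = 1, H^max_κ(αx+βy) > α·H^max_κ(x) + β·H^max_κ(y). -/
open Real Filter Finset

noncomputable section

/-- `ω(n) = n^n / n!`. -/
def omegaFn (n : ℕ) : ℝ := (n : ℝ) ^ n / (n.factorial : ℝ)

/-- `Ω(V)`: the sum of `ω(v)` over the entries of a vector `V`. -/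
def OmegaVec {I : Type*} [Fintype I] (V : I → ℕ) : ℝ := ∑ i, omegaFn (V i)

/-- `Ω(K)`: the sum of `ω(k)` over the entries of a matrix `K`. -/
def OmegaMat {I J : Type*} [Fintype I] [Fintype J] (K : I → J → ℕ) : ℝ :=
  ∑ i, ∑ j, omegaFn (K i j)

/-- `T_K(R,C)`: the number of nonnegative-integer matrices with row sums `R`,
column sums `C`, and entries bounded by `K` (a bound of `⊤` means unbounded). -/
def tableCount {I J : Type*} [Fintype I] [Fintype J]
    (K : I → J → ℕ∞) (R : I → ℕ) (C : J → ℕ) : ℕ :=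
  Set.ncard {A : I → J → ℕ |
    (∀ i, ∑ j, A i j = R i) ∧ (∀ j, ∑ i, A i j = C j) ∧ ∀ i j, (A i j : ℕ∞) ≤ K i j}

/-- The `s`-fold cloning of a margin vector. -/
def cloneVec {m : ℕ} (s : ℕ) (R : Fin m → ℕ) : Fin s × Fin m → ℕ :=
  fun p => s * R p.2

/-- The `s`-fold cloning of a bound matrix. -/
def cloneMat {m n : ℕ} (s : ℕ) (K : Fin m → Fin n → ℕ∞) :
    Fin s × Fin m → Fin s × Fin n → ℕ∞ :=
  fun p q => K p.2 q.2

/-- The mean of the truncated geometric distribution on `{0,…,κ}` with ratio `q`. -/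
def tgMean (κ : ℕ∞) (q : ℝ) : ℝ :=
  if κ = ⊤ then q / (1 - q)
  else (∑ t ∈ Finset.range (κ.toNat + 1), (t : ℝ) * q ^ t) /
    (∑ t ∈ Finset.range (κ.toNat + 1), q ^ t)

/-- The parameter `q(x;κ)` of the truncated geometric distribution `TG(x;κ)` with mean `x`. -/
def tgQ (κ : ℕ∞) (x : ℝ) : ℝ := sInf {q : ℝ | 0 ≤ q ∧ x ≤ tgMean κ q}

/-- The parameter `p(x;κ)` of the truncated geometric distribution `TG(x;κ)` with mean `x`. -/
def tgP (κ : ℕ∞) (x : ℝ) : ℝ :=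
  if κ = ⊤ then 1 - tgQ κ x
  else (∑ t ∈ Finset.range (κ.toNat + 1), tgQ κ x ^ t)⁻¹

/-- The probability mass function of `TG(x;κ)`: `Pr[X=t] = p q^t` for `t ∈ {0,…,κ}`. -/
def tgPMF (κ : ℕ∞) (x : ℝ) (t : ℕ) : ℝ :=
  if (t : ℕ∞) ≤ κ then tgP κ x * tgQ κ x ^ t else 0

/-- `H^max_κ(x)`: the (base-e) entropy of the truncated geometric distribution `TG(x;κ)`. -/
def Hmax (κ : ℕ∞) (x : ℝ) : ℝ := -∑' t : ℕ, tgPMF κ x t * Real.log (tgPMF κ x t)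

/-- The `(κ+1)`-nomial coefficient `(n choose r)_κ`: the coefficient of `x^r` in
`(1+x+⋯+x^κ)^n`; for `κ = ∞` it is `(r+n-1).choose r`. -/
def knomial (κ : ℕ∞) (n r : ℕ) : ℕ :=
  if κ = ⊤ then (r + n - 1).choose r
  else ((∑ t ∈ Finset.range (κ.toNat + 1), (Polynomial.X : Polynomial ℕ) ^ t) ^ n).coeff r

/-- The independence-heuristic estimate `I_κ(R,C)`. -/
def indepEst (κ : ℕ∞) {I J : Type*} [Fintype I] [Fintype J] (R : I → ℕ) (C : J → ℕ) : ℝ :=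
  ((knomial κ (Fintype.card I * Fintype.card J) (∑ i, R i) : ℝ))⁻¹ *
    (∏ i, (knomial κ (Fintype.card J) (R i) : ℝ)) *
    ∏ j, (knomial κ (Fintype.card I) (C j) : ℝ)

/-- The transportation polytope `Π_κ(R,C)` of real matrices with entries in `[0,κ]`,
row sums `R` and column sums `C`. -/
def transportPolytope (κ : ℕ∞) {m n : ℕ} (R : Fin m → ℕ) (C : Fin n → ℕ) :
    Set (Fin m → Fin n → ℝ) :=
  {Z | (∀ i j, 0 ≤ Z i j) ∧ (∀ i j, κ ≠ ⊤ → Z i j ≤ (κ.toNat : ℝ)) ∧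
    (∀ i, ∑ j, Z i j = (R i : ℝ)) ∧ ∀ j, ∑ i, Z i j = (C j : ℝ)}

/-- The generating function `G(x,y) = ∏_{i,j} (1 + x_i y_j + ⋯ + (x_i y_j)^{k_{ij}})`. -/
def genFun {m n : ℕ} (K : Fin m → Fin n → ℕ) (x : Fin m → ℝ) (y : Fin n → ℝ) : ℝ :=
  ∏ i, ∏ j, ∑ t ∈ Finset.range (K i j + 1), (x i * y j) ^ t

/-- The monomial `x^R = ∏_i x_i^{r_i}`. -/
def monom {m : ℕ} (x : Fin m → ℝ) (R : Fin m → ℕ) : ℝ := ∏ i, x i ^ R i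

/-- The concave roof function `f_K(R,C)`: the supremum of `∑_t α_t ln T_K(R^t,C^t)` over
convex combinations of integer margins averaging to `(R,C)` (and `⊥ = -∞` if none exist). -/
def fK {m n : ℕ} (K : Fin m → Fin n → ℕ) (R : Fin m → ℝ) (C : Fin n → ℝ) : EReal :=
  sSup {v : EReal | ∃ (p : ℕ) (α : Fin p → ℝ)
    (Rs : Fin p → Fin m → ℕ) (Cs : Fin p → Fin n → ℕ),
    1 ≤ p ∧ (∀ t, 0 ≤ α t) ∧ ∑ t, α t = 1 ∧
    (∀ i, ∑ t, α t * (Rs t i : ℝ) = R i) ∧ (∀ j, ∑ t, α t * (Cs t j : ℝ) = C j) ∧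
    (∀ t, 0 < tableCount (fun i j => (K i j : ℕ∞)) (Rs t) (Cs t)) ∧
    v = ((∑ t, α t * Real.log (tableCount (fun i j => (K i j : ℕ∞)) (Rs t) (Cs t)) : ℝ) : EReal)}

/-- `e^x` for an extended real `x`, with `e^{-∞} = 0`. -/
def expE (e : EReal) : ℝ := if e = ⊥ then 0 else Real.exp e.toReal

end

/-! At an interior point `z`, let `q` be the parameter of `TG(z;κ)`. Gibbs' inequality against
`TG(z;κ)` bounds the entropy of any `TG(w;κ)` by its cross entropy, which is the affine function
`w ↦ log Z(q) - w log q` (`Z` the normalising constant), with equality only at `w = z`. A function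
touched at every interior point by a line lying strictly above it elsewhere is strictly concave.
For finite `κ` the inequality is strict Jensen for `exp`, for `κ = ∞` everything is explicit:
`H^max_∞(w) = (1 + w) log (1 + w) - w log w`. -/

open Set

theorem strictConcaveOn_of_forall_exists_lt_affine {s : Set ℝ} {f : ℝ → ℝ} (hs : Convex ℝ s)
    (h : ∀ z ∈ interior s, ∃ c d : ℝ, f z = c + d * z ∧ ∀ w ∈ s, w ≠ z → f w < c + d * w) :
    StrictConcaveOn ℝ s f := by
  refine ⟨hs, fun x hx y hy hxy a b ha hb hab => ?_⟩
  have hz : a • x + b • y ∈ openSegment ℝ x y := ⟨a, b, ha, hb, hab, rfl⟩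
  have hz_int : a • x + b • y ∈ interior s := by
    refine interior_maximal
      ((openSegment_subset_segment ℝ x y).trans (hs.segment_subset hx hy)) ?_ hz
    rw [openSegment_eq_Ioo' hxy]
    exact isOpen_Ioo
  obtain ⟨c, d, hfz, hlt⟩ := h _ hz_int
  have hxz : x ≠ a • x + b • y := fun h => hxy (left_mem_openSegment_iff.1 (by rwa [← h] at hz))
  have hyz : y ≠ a • x + b • y := fun h => hxy (right_mem_openSegment_iff.1 (by rwa [← h] at hz))
  simp only [smul_eq_mul] at hfz ⊢
  calc a * f x + b * f y < a * (c + d * x) + b * (c + d * y) := by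
        gcongr
        · exact hlt x hx hxz
        · exact hlt y hy hyz
    _ = f (a * x + b * y) := by rw [hfz]; linear_combination c * hab

def tgPartition (N : ℕ) (q : ℝ) : ℝ := ∑ t ∈ range (N + 1), q ^ t

def tgMoment (N : ℕ) (q : ℝ) : ℝ := ∑ t ∈ range (N + 1), (t : ℝ) * q ^ t

section Finite

variable {N : ℕ} {q z : ℝ}

theorem tgMean_natCast (N : ℕ) (q : ℝ) : tgMean N q = tgMoment N q / tgPartition N q := by
  simp [tgMean, tgMoment, tgPartition]

theorem tgPartition_pos (hq : 0 ≤ q) : 0 < tgPartition N q :=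
  geom_sum_pos hq N.succ_ne_zero

theorem tgMean_natCast_zero (N : ℕ) : tgMean N 0 = 0 := by
  rw [tgMean_natCast, tgMoment, sum_eq_zero fun t _ => by cases t <;> simp, zero_div]

theorem natCast_mul_log_lt_log_tgPartition (hq : 0 < q) {t : ℕ} (ht : t ≤ N) (hN : 1 ≤ N) :
    t * log q < log (tgPartition N q) := by
  rw [← log_pow]
  refine log_lt_log (by positivity) <| single_lt_sum (j := if t = 0 then 1 else 0)
    (by split_ifs <;> omega) (mem_range.2 (by omega)) (mem_range.2 (by split_ifs <;> omega))
    (by positivity) fun k _ _ => by positivity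

theorem tgMean_natCast_lt (hq : 0 ≤ q) (hN : 1 ≤ N) : tgMean N q < N := by
  rw [tgMean_natCast, div_lt_iff₀ (tgPartition_pos hq), tgPartition, mul_sum]
  refine sum_lt_sum (fun t ht => ?_) ⟨0, by simp, ?_⟩
  · gcongr
    exact_mod_cast Nat.lt_succ_iff.1 (mem_range.1 ht)
  · simp only [CharP.cast_eq_zero, pow_zero, mul_one, Nat.cast_pos]
    omega

theorem continuousOn_tgMean_natCast : ContinuousOn (tgMean N) (Ici 0) := by
  rw [show tgMean N = fun q => tgMoment N q / tgPartition N q from funext (tgMean_natCast N)]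
  exact ContinuousOn.div (by unfold tgMoment; fun_prop) (by unfold tgPartition; fun_prop)
    fun q hq => (tgPartition_pos hq).ne'

theorem natCast_sub_tgMean_mul_le (hq : 0 ≤ q) : (N - tgMean N q) * q ≤ N * (N + 1) := by
  have hS := tgPartition_pos (N := N) hq
  have key : q * (N * tgPartition N q - tgMoment N q) ≤ N * (N + 1) * tgPartition N q :=
    calc q * (N * tgPartition N q - tgMoment N q)
        = ∑ t ∈ range (N + 1), ((N : ℝ) - t) * q ^ (t + 1) := by
          simp only [tgPartition, tgMoment, mul_sum, ← sum_sub_distrib]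
          exact sum_congr rfl fun t _ => by ring
      _ ≤ ∑ t ∈ range (N + 1), (N : ℝ) * tgPartition N q := by
          refine sum_le_sum fun t ht => ?_
          obtain ht | rfl := (Nat.lt_succ_iff.1 (mem_range.1 ht)).lt_or_eq
          · have : q ^ (t + 1) ≤ tgPartition N q :=
              single_le_sum (fun k _ => pow_nonneg hq k) (mem_range.2 (by omega))
            exact mul_le_mul (by linarith [(Nat.cast_nonneg t : (0 : ℝ) ≤ t)]) this
              (by positivity) (by positivity)
          · simp only [sub_self, zero_mul]; positivity
      _ = N * (N + 1) * tgPartition N q := by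
          simp only [sum_const, card_range, nsmul_eq_mul, Nat.cast_add, Nat.cast_one]
          ring
  rw [tgMean_natCast, sub_mul, div_mul_eq_mul_div, sub_le_iff_le_add, ← sub_le_iff_le_add',
    le_div_iff₀ hS]
  nlinarith

theorem exists_lt_tgMean_natCast (hz : z < N) : ∃ q, 0 ≤ q ∧ z < tgMean N q := by
  have hNz : 0 < (N : ℝ) - z := sub_pos.2 hz
  set q := N * (N + 1) / (N - z) + 1 with hq
  have hq0 : 0 < q := by positivity
  refine ⟨q, hq0.le, ?_⟩
  have hbound := natCast_sub_tgMean_mul_le (N := N) hq0.le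
  have : (N - z) * q = N * (N + 1) + (N - z) := by
    rw [hq]; field_simp
  nlinarith

theorem tgQ_nonneg (κ : ℕ∞) (x : ℝ) : 0 ≤ tgQ κ x :=
  Real.sInf_nonneg fun _ hq => hq.1

theorem tgMean_natCast_tgQ (hz0 : 0 ≤ z) (hzN : z < N) : tgMean N (tgQ N z) = z := by
  have hbdd : BddBelow {q : ℝ | 0 ≤ q ∧ z ≤ tgMean N q} := ⟨0, fun _ hq => hq.1⟩
  have hclosed : IsClosed {q : ℝ | 0 ≤ q ∧ z ≤ tgMean N q} :=
    continuousOn_tgMean_natCast.preimage_isClosed_of_isClosed isClosed_Ici isClosed_Ici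
  obtain ⟨q₀, hq₀, hzq₀⟩ := exists_lt_tgMean_natCast hzN
  have hmem : tgQ N z ∈ {q : ℝ | 0 ≤ q ∧ z ≤ tgMean N q} :=
    hclosed.csInf_mem ⟨q₀, hq₀, hzq₀.le⟩ hbdd
  -- the mean takes the value `z` somewhere in `[0, tgQ N z]`, and that point is in the set
  obtain ⟨q, hq, hqz⟩ := intermediate_value_Icc hmem.1
    (continuousOn_tgMean_natCast.mono Icc_subset_Ici_self)
    ⟨(tgMean_natCast_zero N).trans_le hz0, hmem.2⟩
  rwa [← le_antisymm hq.2 (csInf_le hbdd ⟨hq.1, hqz.ge⟩)]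

-- `sInf ∅ = 0`: at the right endpoint the point mass at `N` is encoded by the ratio `0`,
-- i.e. by the point mass at `0`, which has the same entropy `0`.
theorem tgQ_natCast_self (hN : 1 ≤ N) : tgQ N N = 0 := by
  rw [tgQ, eq_empty_of_forall_notMem (s := {q : ℝ | 0 ≤ q ∧ (N : ℝ) ≤ tgMean N q})
    fun q hq => (tgMean_natCast_lt hq.1 hN).not_ge hq.2, Real.sInf_empty]

theorem Hmax_eq_zero_of_tgQ_eq_zero {κ : ℕ∞} {x : ℝ} (h : tgQ κ x = 0) : Hmax κ x = 0 := by
  have hP : tgP κ x = 1 := by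
    unfold tgP
    split_ifs <;> simp [h, sum_range_succ']
  have hterm : ∀ t, tgPMF κ x t * log (tgPMF κ x t) = 0 := by
    intro t
    unfold tgPMF
    split_ifs
    · rw [hP, h]; cases t <;> simp
    · simp
  simp [Hmax, hterm]

theorem Hmax_natCast {w : ℝ} (hq : 0 < tgQ N w) :
    Hmax N w = log (tgPartition N (tgQ N w)) - tgMean N (tgQ N w) * log (tgQ N w) := by
  obtain ⟨q, hqdef⟩ : ∃ q, tgQ N w = q := ⟨_, rfl⟩
  rw [hqdef] at hq ⊢
  have hS := tgPartition_pos (N := N) hq.le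
  have hvanish : ∀ t ∉ range (N + 1), tgPMF N w t * log (tgPMF N w t) = 0 := by
    intro t ht
    simp_all [tgPMF]
  have hterm : ∀ t ∈ range (N + 1), tgPMF N w t * log (tgPMF N w t) =
      log q / tgPartition N q * (t * q ^ t) - log (tgPartition N q) / tgPartition N q * q ^ t := by
    intro t ht
    have : (t : ℕ∞) ≤ N := by exact_mod_cast Nat.lt_succ_iff.1 (mem_range.1 ht)
    rw [tgPMF, if_pos this, tgP, if_neg (ENat.natCast_ne_top N), ENat.toNat_natCast, hqdef,
      ← tgPartition, log_mul (inv_ne_zero hS.ne') (pow_ne_zero _ hq.ne'), log_inv, log_pow]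
    field_simp
    ring
  rw [Hmax, tsum_eq_sum hvanish, sum_congr rfl hterm, sum_sub_distrib, ← mul_sum, ← mul_sum,
    ← tgMoment, ← tgPartition, tgMean_natCast]
  field_simp
  ring

theorem log_tgPartition_sub_lt (hN : 1 ≤ N) {p q : ℝ} (hp : 0 < p) (hq : 0 < q) (hpq : p ≠ q) :
    log (tgPartition N p) - tgMean N p * log p < log (tgPartition N q) - tgMean N p * log q := by
  have hS := tgPartition_pos (N := N) hp.le
  have hL : log q - log p ≠ 0 := sub_ne_zero.2 fun h => hpq (log_injOn_pos hp hq h.symm)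
  have hJensen := strictConvexOn_exp.map_sum_lt (t := range (N + 1))
    (w := fun t => p ^ t / tgPartition N p) (p := fun t : ℕ => t * (log q - log p))
    (fun t _ => by positivity) (by rw [← sum_div]; exact div_self hS.ne')
    (fun _ _ => mem_univ _) ⟨0, by simp, 1, mem_range.2 (by omega), by simpa using hL.symm⟩
  have hmean : ∑ t ∈ range (N + 1), p ^ t / tgPartition N p * (t * (log q - log p)) =
      tgMean N p * (log q - log p) := by
    rw [tgMean_natCast, tgMoment, sum_div, sum_mul]
    exact sum_congr rfl fun t _ => by ring
  have hexp : ∑ t ∈ range (N + 1), p ^ t / tgPartition N p * exp (t * (log q - log p)) =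
      tgPartition N q / tgPartition N p := by
    rw [show tgPartition N q = ∑ t ∈ range (N + 1), q ^ t from rfl, sum_div]
    refine sum_congr rfl fun t _ => ?_
    rw [exp_nat_mul, exp_sub, exp_log hq, exp_log hp, div_pow]
    field_simp
  simp only [smul_eq_mul] at hJensen
  rw [hmean, hexp, ← lt_log_iff_exp_lt (div_pos (tgPartition_pos hq.le) hS),
    log_div (tgPartition_pos hq.le).ne' hS.ne'] at hJensen
  linarith

theorem tgQ_natCast_pos (hz : z ∈ Ioo 0 (N : ℝ)) : 0 < tgQ N z := by
  refine (tgQ_nonneg _ _).lt_of_ne fun h => hz.1.ne ?_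
  rw [← tgMean_natCast_tgQ hz.1.le hz.2, ← h, tgMean_natCast_zero]

theorem Hmax_natCast_lt {w : ℝ} (hz : z ∈ Ioo 0 (N : ℝ)) (hw : w ∈ Icc 0 (N : ℝ)) (hwz : w ≠ z) :
    Hmax N w < log (tgPartition N (tgQ N z)) - w * log (tgQ N z) := by
  have hN : 1 ≤ N := Nat.cast_pos.1 (hz.1.trans hz.2)
  have hq := tgQ_natCast_pos hz
  obtain hwN | rfl := hw.2.lt_or_eq
  · have hpw : tgMean N (tgQ N w) = w := tgMean_natCast_tgQ hw.1 hwN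
    obtain hp | hp := (tgQ_nonneg N w).eq_or_lt
    · obtain rfl : w = 0 := by rw [← hpw, ← hp, tgMean_natCast_zero]
      simpa [Hmax_eq_zero_of_tgQ_eq_zero hp.symm] using
        natCast_mul_log_lt_log_tgPartition hq (Nat.zero_le N) hN
    · have hpq : tgQ N w ≠ tgQ N z := fun h => hwz <| by
        rw [← hpw, h, tgMean_natCast_tgQ hz.1.le hz.2]
      simpa only [Hmax_natCast hp, hpw] using log_tgPartition_sub_lt hN hp hq hpq
  · rw [Hmax_eq_zero_of_tgQ_eq_zero (tgQ_natCast_self hN), sub_pos]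
    exact natCast_mul_log_lt_log_tgPartition hq le_rfl hN

end Finite

theorem Hmax_natCast_strictConcaveOn (N : ℕ) : StrictConcaveOn ℝ (Icc 0 (N : ℝ)) (Hmax N) := by
  refine strictConcaveOn_of_forall_exists_lt_affine (convex_Icc 0 (N : ℝ)) fun z hz => ?_
  rw [interior_Icc] at hz
  refine ⟨log (tgPartition N (tgQ N z)), -log (tgQ N z), ?_, fun w hw hwz => ?_⟩
  · rw [Hmax_natCast (tgQ_natCast_pos hz), tgMean_natCast_tgQ hz.1.le hz.2]
    ring
  · linarith [Hmax_natCast_lt hz hw hwz]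

section Infinite

variable {w z : ℝ}

theorem tgQ_top (hw : 0 ≤ w) : tgQ ⊤ w = w / (1 + w) := by
  have h1w : 0 < 1 + w := by linarith
  refine IsLeast.csInf_eq ⟨⟨by positivity, ?_⟩, fun q ⟨hq0, hq⟩ => ?_⟩
  · rw [tgMean, if_pos rfl]
    field_simp
    exact le_of_eq (by ring)
  · rw [tgMean, if_pos rfl] at hq
    rw [div_le_iff₀ h1w]
    rcases lt_or_ge q 1 with hq1 | hq1
    · rw [le_div_iff₀ (by linarith)] at hq
      linarith
    · nlinarith

theorem Hmax_top (hw : 0 ≤ w) : Hmax ⊤ w = (1 + w) * log (1 + w) - w * log w := by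
  obtain rfl | hw := hw.eq_or_lt
  · simpa using Hmax_eq_zero_of_tgQ_eq_zero (by rw [tgQ_top le_rfl, zero_div])
  have h1w : 0 < 1 + w := by linarith
  set q := w / (1 + w) with hq
  have hq0 : 0 < q := by positivity
  have hq1 : q < 1 := by rw [hq, div_lt_one h1w]; linarith
  have hnorm : ‖q‖ < 1 := by rwa [Real.norm_eq_abs, abs_of_pos hq0]
  have hterm : ∀ t : ℕ, tgPMF ⊤ w t * log (tgPMF ⊤ w t) =
      -((1 + w)⁻¹ * log (1 + w)) * q ^ t + (1 + w)⁻¹ * log q * (t * q ^ t) := by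
    intro t
    have h1q : 1 - q = (1 + w)⁻¹ := by rw [hq]; field_simp; ring
    rw [tgPMF, if_pos le_top, tgP, if_pos rfl, tgQ_top hw.le, ← hq, h1q,
      log_mul (by positivity) (by positivity), log_inv, log_pow]
    ring
  have hsum := ((hasSum_geometric_of_lt_one hq0.le hq1).mul_left (-((1 + w)⁻¹ * log (1 + w)))).add
    ((hasSum_coe_mul_geometric_of_norm_lt_one hnorm).mul_left ((1 + w)⁻¹ * log q))
  rw [Hmax, tsum_congr hterm, hsum.tsum_eq, hq, log_div hw.ne' h1w.ne']
  field_simp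
  ring

theorem Hmax_top_lt (hw : 0 ≤ w) (hz : 0 < z) (hwz : w ≠ z) :
    Hmax ⊤ w < (1 + w) * log (1 + z) - w * log z := by
  rw [Hmax_top hw]
  obtain rfl | hw := hw.eq_or_lt
  · simpa using log_pos (by linarith : 1 < 1 + z)
  -- Gibbs' inequality for the two-point distributions `(w, 1) / (1 + w)` and `(z, 1) / (1 + z)`
  have h₁ : log (z * (1 + w) / (w * (1 + z))) < z * (1 + w) / (w * (1 + z)) - 1 := by
    refine log_lt_sub_one_of_pos (by positivity) fun h => hwz ?_
    rw [div_eq_one_iff_eq (by positivity)] at h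
    linarith
  have h₂ : log ((1 + w) / (1 + z)) ≤ (1 + w) / (1 + z) - 1 :=
    log_le_sub_one_of_pos (by positivity)
  have hzero : w * (z * (1 + w) / (w * (1 + z)) - 1) + ((1 + w) / (1 + z) - 1) = 0 := by
    field_simp
    ring
  rw [log_div (by positivity) (by positivity), log_mul hz.ne' (by positivity),
    log_mul hw.ne' (by positivity)] at h₁
  rw [log_div (by positivity) (by positivity)] at h₂
  nlinarith [mul_lt_mul_of_pos_left h₁ hw]

end Infinite

theorem Hmax_top_strictConcaveOn : StrictConcaveOn ℝ (Ici 0) (Hmax ⊤) := by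
  refine strictConcaveOn_of_forall_exists_lt_affine (convex_Ici 0) fun z hz => ?_
  rw [interior_Ici] at hz
  refine ⟨log (1 + z), log (1 + z) - log z, ?_, fun w hw hwz => ?_⟩
  · rw [Hmax_top hz.le]
    ring
  · linarith [Hmax_top_lt hw hz hwz]

theorem Hmax_strictConcave_general (κ : ℕ∞) (x y : ℝ)
    (hx0 : 0 ≤ x) (hxκ : κ ≠ ⊤ → x ≤ (κ.toNat : ℝ))
    (hy0 : 0 ≤ y) (hyκ : κ ≠ ⊤ → y ≤ (κ.toNat : ℝ))
    (hxy : x ≠ y) (a b : ℝ) (ha : 0 < a) (hb : 0 < b) (hab : a + b = 1) :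
    a * Hmax κ x + b * Hmax κ y < Hmax κ (a * x + b * y) := by
  induction κ using ENat.recTopCoe with
  | top => exact Hmax_top_strictConcaveOn.2 hx0 hy0 hxy ha hb hab
  | coe N =>
    simp only [ne_eq, ENat.natCast_ne_top, not_false_eq_true, ENat.toNat_natCast,
      forall_const] at hxκ hyκ
    exact (Hmax_natCast_strictConcaveOn N).2 ⟨hx0, hxκ⟩ ⟨hy0, hyκ⟩ hxy ha hb hab

/-- **Lemma.** `H^max_κ` is strictly concave on its domain `[0,κ]`
(`[0,∞)` when `κ = ∞`). -/
theorem Hmax_strictConcave (κ : ℕ∞) (hκ : 1 ≤ κ) (x y : ℝ)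
    (hx0 : 0 ≤ x) (hxκ : κ ≠ ⊤ → x ≤ (κ.toNat : ℝ))
    (hy0 : 0 ≤ y) (hyκ : κ ≠ ⊤ → y ≤ (κ.toNat : ℝ))
    (hxy : x ≠ y) (a b : ℝ) (ha : 0 < a) (hb : 0 < b) (hab : a + b = 1) :
    a * Hmax κ x + b * Hmax κ y < Hmax κ (a * x + b * y) :=
  Hmax_strictConcave_general κ x y hx0 hxκ hy0 hyκ hxy a b ha hb hab
end

section
/- Let κ be a positive integer, let R ∈ ℤ_{≥0}^m and C ∈ ℤ_{≥0}^n with |R| = |C|, and suppose Π_κ(R,C) contains a matrix all of whose entries lie strictly between 0 and κ. Let G(x,y) := ∏_{i=1}^m ∏_{j=1}^n [1 + x_i y_j + ⋯ + (x_i y_j)^κ]. Then ln ( inf_{x_1,…,x_m,y_1,…,y_n > 0} G(x,y)/(x^R y^C) ) = max_{Z ∈ Π_κ(R,C)} Σ_{i=1}^m Σ_{j=1}^n H^max_κ(z_{ij}), where x^R y^C := ∏_i x_i^{r_i} ∏_j y_j^{c_j}. -/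
open Real Filter Finset

/-! Writing `x = e^s`, `y = e^t` and `cumulant κ u = log (1 + e^u + ⋯ + e^{κu})`, for every `Z`
with margins `R, C` the quantity `G(x,y) / (x^R y^C)` is the exponential of the dual objective
`∑ᵢⱼ (cumulant κ (sᵢ + tⱼ) - zᵢⱼ (sᵢ + tⱼ))`. Since `H^max_κ` is the convex conjugate of
`cumulant κ` (Gibbs' inequality), every `Z ∈ Π_κ(R,C)` has entropy at most the dual objective:
weak duality. An interior point of `Π_κ(R,C)` makes the dual objective coercive on the subspace
of matrices `(sᵢ + tⱼ)`, so it has a minimiser there; by first-order optimality the matrix of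
means `cumulant' (sᵢ + tⱼ)` has margins `R, C`, and for it Gibbs' inequality is an equality. -/

open Topology

namespace TruncGeom

variable (κ : ℕ)

noncomputable def partition (q : ℝ) : ℝ := ∑ t ∈ range (κ + 1), q ^ t

noncomputable def mean (q : ℝ) : ℝ := (∑ t ∈ range (κ + 1), (t : ℝ) * q ^ t) / partition κ q

noncomputable def cumulant (u : ℝ) : ℝ := Real.log (partition κ (exp u))

variable {κ}

lemma pow_le_partition {q : ℝ} (hq : 0 ≤ q) {t : ℕ} (ht : t ≤ κ) : q ^ t ≤ partition κ q :=
  single_le_sum (f := (q ^ ·)) (fun _ _ => pow_nonneg hq _) (mem_range.2 (Nat.lt_succ_of_le ht))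

lemma one_le_partition {q : ℝ} (hq : 0 ≤ q) : 1 ≤ partition κ q := by
  simpa using pow_le_partition hq (Nat.zero_le κ)

lemma partition_pos {q : ℝ} (hq : 0 ≤ q) : 0 < partition κ q :=
  one_pos.trans_le (one_le_partition hq)

lemma partition_zero : partition κ 0 = 1 := by
  simp [partition, zero_pow_eq]

lemma mean_zero : mean κ 0 = 0 := by
  simp [mean, zero_pow_eq]

lemma mean_nonneg {q : ℝ} (hq : 0 ≤ q) : 0 ≤ mean κ q := by
  unfold mean
  exact div_nonneg (sum_nonneg fun t _ => by positivity) (partition_pos hq).le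

lemma mean_pos (hκ : 0 < κ) {q : ℝ} (hq : 0 < q) : 0 < mean κ q := by
  refine div_pos (sum_pos' (fun t _ => by positivity) ⟨1, mem_range.2 (by omega), ?_⟩)
    (partition_pos hq.le)
  simpa using hq

lemma mean_lt (hκ : 0 < κ) {q : ℝ} (hq : 0 ≤ q) : mean κ q < κ := by
  rw [mean, div_lt_iff₀ (partition_pos hq), partition, mul_sum]
  refine sum_lt_sum (fun t ht => ?_) ⟨0, mem_range.2 κ.succ_pos, by simpa using hκ⟩
  have : (t : ℝ) ≤ κ := by exact_mod_cast Nat.lt_succ_iff.1 (mem_range.1 ht)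
  exact mul_le_mul_of_nonneg_right this (pow_nonneg hq t)

lemma continuousOn_mean : ContinuousOn (mean κ) (Set.Ici 0) := by
  refine ContinuousOn.div (by fun_prop) (by unfold partition; fun_prop) fun q hq => ?_
  exact (partition_pos hq).ne'

lemma mul_div_add_le_mean {Q : ℝ} (hQ : 1 ≤ Q) : κ * Q / (Q + κ) ≤ mean κ Q := by
  have hQ0 : 0 < Q := one_pos.trans_le hQ
  rcases Nat.eq_zero_or_pos κ with rfl | hκ
  · simp [mean_nonneg hQ0.le]
  have hnum : κ * Q ^ κ ≤ ∑ t ∈ range (κ + 1), (t : ℝ) * Q ^ t :=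
    single_le_sum (f := fun t : ℕ => (t : ℝ) * Q ^ t) (fun t _ => by positivity)
      (mem_range.2 κ.lt_succ_self)
  have hden : partition κ Q ≤ Q ^ (κ - 1) * (Q + κ) := by
    have hlow : ∑ t ∈ range κ, Q ^ t ≤ κ * Q ^ (κ - 1) := by
      simpa using sum_le_card_nsmul (range κ) (Q ^ ·) (Q ^ (κ - 1))
        fun t ht => pow_le_pow_right₀ hQ (by have := mem_range.1 ht; omega)
    have hpow : Q ^ κ = Q ^ (κ - 1) * Q := by rw [← pow_succ, Nat.sub_add_cancel hκ]
    rw [partition, sum_range_succ]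
    nlinarith
  calc κ * Q / (Q + κ) = κ * Q ^ κ / (Q ^ (κ - 1) * (Q + κ)) := by
        rw [← Nat.sub_add_cancel hκ, pow_succ, Nat.add_sub_cancel]
        field_simp
    _ ≤ κ * Q ^ κ / partition κ Q :=
        div_le_div_of_nonneg_left (by positivity) (partition_pos hQ0.le) hden
    _ ≤ mean κ Q := div_le_div_of_nonneg_right hnum (partition_pos hQ0.le).le

lemma exists_mean_eq {x : ℝ} (hx0 : 0 ≤ x) (hxκ : x < κ) : ∃ q, 0 ≤ q ∧ mean κ q = x := by
  set Q : ℝ := max 1 (κ * x / (κ - x) + 1)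
  have hQ : 1 ≤ Q := le_max_left _ _
  have hxQ : x ≤ mean κ Q := by
    have h : κ * x / (κ - x) < Q := by linarith [le_max_right 1 (κ * x / (κ - x) + 1)]
    rw [div_lt_iff₀ (by linarith)] at h
    refine le_trans ?_ (mul_div_add_le_mean hQ)
    rw [le_div_iff₀ (by linarith)]
    nlinarith
  obtain ⟨q, hq, rfl⟩ := intermediate_value_Icc (zero_le_one.trans hQ)
    (continuousOn_mean.mono Set.Icc_subset_Ici_self) ⟨by rwa [mean_zero], hxQ⟩
  exact ⟨q, hq.1, rfl⟩

lemma cumulant_nonneg (u : ℝ) : 0 ≤ cumulant κ u :=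
  Real.log_nonneg (one_le_partition (exp_pos u).le)

lemma natCast_mul_le_cumulant (u : ℝ) : κ * u ≤ cumulant κ u := by
  rw [cumulant, ← Real.log_exp (κ * u), exp_nat_mul]
  exact Real.log_le_log (by positivity) (pow_le_partition (exp_pos u).le le_rfl)

lemma min_mul_abs_le_cumulant_sub (z u : ℝ) : min z (κ - z) * |u| ≤ cumulant κ u - z * u := by
  rcases le_total 0 u with hu | hu
  · rw [abs_of_nonneg hu]
    nlinarith [min_le_right z (κ - z), natCast_mul_le_cumulant (κ := κ) u]
  · rw [abs_of_nonpos hu]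
    nlinarith [min_le_left z (κ - z), cumulant_nonneg (κ := κ) u]

lemma partition_exp (u : ℝ) : partition κ (exp u) = ∑ t ∈ range (κ + 1), exp (t * u) := by
  simp only [partition, exp_nat_mul]

lemma continuous_cumulant : Continuous (cumulant κ) := by
  refine Continuous.log ?_ fun u => (partition_pos (exp_pos u).le).ne'
  unfold partition
  fun_prop

lemma hasDerivAt_cumulant (u : ℝ) : HasDerivAt (cumulant κ) (mean κ (exp u)) u := by
  have hpartition : HasDerivAt (fun u => partition κ (exp u))
      (∑ t ∈ range (κ + 1), (t : ℝ) * exp u ^ t) u := by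
    simp only [partition_exp, ← exp_nat_mul]
    exact HasDerivAt.fun_sum fun t _ => by
      simpa [mul_comm] using ((hasDerivAt_id u).const_mul (t : ℝ)).exp
  exact hpartition.log (partition_pos (exp_pos u).le).ne'

/-- Strict Jensen for `exp` under the truncated geometric weights `e^{tv} / partition κ (e^v)`. -/
lemma cumulant_add_mean_mul_sub_lt (hκ : 0 < κ) {u v : ℝ} (huv : u ≠ v) :
    cumulant κ v + mean κ (exp v) * (u - v) < cumulant κ u := by
  have hZ := partition_pos (κ := κ) (exp_pos v).le
  have hw : ∑ t ∈ range (κ + 1), exp v ^ t / partition κ (exp v) = 1 := by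
    rw [← sum_div, ← partition, div_self hZ.ne']
  have hjensen := strictConvexOn_exp.map_sum_lt (fun t _ => by positivity) hw
    (p := fun t : ℕ => t * (u - v)) (fun _ _ => Set.mem_univ _)
    ⟨0, mem_range.2 κ.succ_pos, 1, mem_range.2 (by omega), by simpa using (sub_ne_zero.2 huv).symm⟩
  have hmean : ∑ t ∈ range (κ + 1), (exp v ^ t / partition κ (exp v)) • ((t : ℝ) * (u - v)) =
      mean κ (exp v) * (u - v) := by
    simp only [mean, smul_eq_mul, div_mul_eq_mul_div, sum_div, sum_mul]
    exact sum_congr rfl fun t _ => by ring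
  have hratio : ∑ t ∈ range (κ + 1), (exp v ^ t / partition κ (exp v)) • exp (t * (u - v)) =
      partition κ (exp u) / partition κ (exp v) := by
    simp only [partition, smul_eq_mul, sum_div]
    refine sum_congr rfl fun t _ => ?_
    rw [div_mul_eq_mul_div, ← exp_nat_mul, ← exp_nat_mul, ← exp_add]
    ring_nf
  rw [hmean, hratio, ← Real.lt_log_iff_exp_lt (div_pos (partition_pos (exp_pos u).le) hZ),
    Real.log_div (partition_pos (exp_pos u).le).ne' hZ.ne'] at hjensen
  rw [cumulant, cumulant]
  linarith

lemma cumulant_add_mean_mul_sub_le (hκ : 0 < κ) (u v : ℝ) :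
    cumulant κ v + mean κ (exp v) * (u - v) ≤ cumulant κ u := by
  rcases eq_or_ne u v with rfl | huv
  · simp
  · exact (cumulant_add_mean_mul_sub_lt hκ huv).le

lemma strictMono_mean_exp (hκ : 0 < κ) : StrictMono fun u => mean κ (exp u) := by
  intro v u hvu
  have h₁ := cumulant_add_mean_mul_sub_lt hκ hvu.ne'
  have h₂ := cumulant_add_mean_mul_sub_lt hκ hvu.ne
  nlinarith

lemma strictMonoOn_mean (hκ : 0 < κ) : StrictMonoOn (mean κ) (Set.Ici 0) := by
  intro a ha b hb hab
  rcases (Set.mem_Ici.1 ha).eq_or_lt with rfl | ha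
  · rw [mean_zero]
    exact mean_pos hκ hab
  · rw [← exp_log ha, ← exp_log (ha.trans hab)]
    exact strictMono_mean_exp hκ (Real.log_lt_log ha hab)

lemma tgMean_natCast (q : ℝ) : tgMean κ q = mean κ q := by
  simp [tgMean, mean, partition]

lemma tgQ_mean (hκ : 0 < κ) {q : ℝ} (hq : 0 ≤ q) : tgQ κ (mean κ q) = q := by
  refine IsLeast.csInf_eq ⟨⟨hq, (tgMean_natCast q).ge⟩, fun q' ⟨hq', hle⟩ => ?_⟩
  rw [tgMean_natCast] at hle
  exact (strictMonoOn_mean hκ).le_iff_le hq hq' |>.1 hle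

/-- No ratio has mean `κ`, so `tgQ` takes the junk value `sInf ∅ = 0` here. -/
lemma tgQ_natCast_self (hκ : 0 < κ) : tgQ κ κ = 0 := by
  rw [tgQ]
  convert Real.sInf_empty
  refine Set.eq_empty_of_forall_notMem fun q ⟨hq, hle⟩ => ?_
  rw [tgMean_natCast] at hle
  exact (mean_lt hκ hq).not_ge hle

lemma Hmax_eq_of_tgQ_eq {x q : ℝ} (hq : 0 ≤ q) (hx : tgQ κ x = q) :
    Hmax κ x = Real.log (partition κ q) - mean κ q * Real.log q := by
  have hZ := partition_pos (κ := κ) hq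
  have hpmf : ∀ t, tgPMF κ x t = if t ≤ κ then (partition κ q)⁻¹ * q ^ t else 0 := fun t => by
    simp [tgPMF, tgP, hx, partition]
  have hterm : ∀ t : ℕ, (partition κ q)⁻¹ * q ^ t * Real.log ((partition κ q)⁻¹ * q ^ t) =
      (partition κ q)⁻¹ * q ^ t * (t * Real.log q - Real.log (partition κ q)) := fun t => by
    rcases eq_or_ne (q ^ t) 0 with h | h
    · simp [h]
    · rw [Real.log_mul (inv_ne_zero hZ.ne') h, Real.log_inv, Real.log_pow]
      ring
  rw [Hmax, tsum_eq_sum (s := range (κ + 1)) fun t ht => by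
    simp [hpmf, show ¬t ≤ κ by simpa [Nat.lt_succ_iff] using ht]]
  rw [sum_congr rfl fun t ht => by rw [hpmf, if_pos (Nat.lt_succ_iff.1 (mem_range.1 ht)), hterm]]
  have hmass : ∑ t ∈ range (κ + 1), (partition κ q)⁻¹ * q ^ t = 1 := by
    rw [← mul_sum]
    exact inv_mul_cancel₀ hZ.ne'
  have hmean : ∑ t ∈ range (κ + 1), (partition κ q)⁻¹ * q ^ t * (t * Real.log q) =
      mean κ q * Real.log q := by
    simp only [mean, div_eq_inv_mul, mul_sum, sum_mul]
    exact sum_congr rfl fun t _ => by ring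
  simp only [mul_sub, sum_sub_distrib, ← sum_mul, hmass, hmean]
  ring

lemma Hmax_mean_exp (hκ : 0 < κ) (u : ℝ) :
    Hmax κ (mean κ (exp u)) = cumulant κ u - mean κ (exp u) * u := by
  rw [Hmax_eq_of_tgQ_eq (exp_pos u).le (tgQ_mean hκ (exp_pos u).le), Real.log_exp, cumulant]

lemma Hmax_natCast_self (hκ : 0 < κ) : Hmax κ κ = 0 := by
  simp [Hmax_eq_of_tgQ_eq le_rfl (tgQ_natCast_self hκ), partition_zero]

/-- Gibbs' inequality: `Hmax κ` is the convex conjugate of `cumulant κ`. -/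
lemma Hmax_le_cumulant_sub (hκ : 0 < κ) {x : ℝ} (hx0 : 0 ≤ x) (hxκ : x ≤ κ) (u : ℝ) :
    Hmax κ x ≤ cumulant κ u - x * u := by
  rcases hxκ.eq_or_lt with rfl | hxκ
  · rw [Hmax_natCast_self hκ]
    linarith [natCast_mul_le_cumulant (κ := κ) u]
  obtain ⟨q, hq, rfl⟩ := exists_mean_eq hx0 hxκ
  rcases hq.eq_or_lt with rfl | hq
  · rw [Hmax_eq_of_tgQ_eq le_rfl (tgQ_mean hκ le_rfl), partition_zero, mean_zero]
    simpa using cumulant_nonneg (κ := κ) u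
  · rw [← exp_log hq, Hmax_mean_exp hκ]
    linarith [cumulant_add_mean_mul_sub_le hκ u (Real.log q)]

end TruncGeom

open TruncGeom

section Duality

variable {ι ι' : Type*}

@[simps]
def pairSum : (ι → ℝ) × (ι' → ℝ) →ₗ[ℝ] ι → ι' → ℝ where
  toFun p i j := p.1 i + p.2 j
  map_add' _ _ := by ext; simp only [Prod.fst_add, Prod.snd_add, Pi.add_apply]; ring
  map_smul' _ _ := by ext; simp only [Prod.smul_fst, Prod.smul_snd, Pi.smul_apply, smul_eq_mul,
    RingHom.id_apply]; ring

variable [Fintype ι] [Fintype ι']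

def HasMargins (Z : ι → ι' → ℝ) (r : ι → ℝ) (c : ι' → ℝ) : Prop :=
  (∀ i, ∑ j, Z i j = r i) ∧ ∀ j, ∑ i, Z i j = c j

noncomputable def dualObjective (κ : ℕ) (Z w : ι → ι' → ℝ) : ℝ :=
  ∑ i, ∑ j, (cumulant κ (w i j) - Z i j * w i j)

variable {κ : ℕ}

lemma dualObjective_pairSum {Z : ι → ι' → ℝ} {r : ι → ℝ} {c : ι' → ℝ} (hZ : HasMargins Z r c)
    (p : (ι → ℝ) × (ι' → ℝ)) :
    dualObjective κ Z (pairSum p) =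
      ∑ i, ∑ j, cumulant κ (p.1 i + p.2 j) - ∑ i, r i * p.1 i - ∑ j, c j * p.2 j := by
  have hlin : ∑ i, ∑ j, Z i j * (p.1 i + p.2 j) = ∑ i, r i * p.1 i + ∑ j, c j * p.2 j := by
    simp only [mul_add, sum_add_distrib, ← hZ.1, ← hZ.2, sum_mul]
    exact congrArg _ sum_comm
  simp only [dualObjective, pairSum_apply, sum_sub_distrib, hlin]
  ring

lemma dualObjective_pairSum_congr {Z Z' : ι → ι' → ℝ} {r : ι → ℝ} {c : ι' → ℝ}
    (hZ : HasMargins Z r c) (hZ' : HasMargins Z' r c) (p : (ι → ℝ) × (ι' → ℝ)) :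
    dualObjective κ Z (pairSum p) = dualObjective κ Z' (pairSum p) := by
  rw [dualObjective_pairSum hZ, dualObjective_pairSum hZ']

lemma continuous_dualObjective (Z : ι → ι' → ℝ) : Continuous (dualObjective κ Z) := by
  unfold dualObjective
  have := continuous_cumulant (κ := κ)
  fun_prop

lemma mul_norm_le_dualObjective {Z : ι → ι' → ℝ} {δ : ℝ} (hδ : 0 < δ)
    (hZ : ∀ i j, δ ≤ min (Z i j) (κ - Z i j)) (w : ι → ι' → ℝ) :
    δ * ‖w‖ ≤ dualObjective κ Z w := by
  have hterm : ∀ i j, δ * |w i j| ≤ cumulant κ (w i j) - Z i j * w i j := fun i j =>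
    (mul_le_mul_of_nonneg_right (hZ i j) (abs_nonneg _)).trans (min_mul_abs_le_cumulant_sub _ _)
  have hnonneg : ∀ i j, 0 ≤ cumulant κ (w i j) - Z i j * w i j := fun i j =>
    (mul_nonneg hδ.le (abs_nonneg _)).trans (hterm i j)
  have hD : 0 ≤ dualObjective κ Z w / δ :=
    div_nonneg (sum_nonneg fun i _ => sum_nonneg fun j _ => hnonneg i j) hδ.le
  rw [← le_div_iff₀' hδ, pi_norm_le_iff_of_nonneg hD]
  refine fun i => (pi_norm_le_iff_of_nonneg hD).2 fun j => ?_
  rw [Real.norm_eq_abs, le_div_iff₀' hδ]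
  calc δ * |w i j| ≤ cumulant κ (w i j) - Z i j * w i j := hterm i j
    _ ≤ ∑ j', (cumulant κ (w i j') - Z i j' * w i j') :=
        single_le_sum (fun j' _ => hnonneg i j') (mem_univ j)
    _ ≤ dualObjective κ Z w :=
        single_le_sum (f := fun i => ∑ j', (cumulant κ (w i j') - Z i j' * w i j'))
          (fun i _ => sum_nonneg fun j' _ => hnonneg i j') (mem_univ i)

lemma tendsto_dualObjective_cocompact {Z : ι → ι' → ℝ} (hZ : ∀ i j, 0 < Z i j ∧ Z i j < κ) :
    Tendsto (dualObjective κ Z) (cocompact _) atTop := by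
  obtain ⟨δ, hδZ, hδ⟩ : ∃ δ, (∀ i j, δ < min (Z i j) (κ - Z i j)) ∧ 0 < δ :=
    ((eventually_all.2 fun i => eventually_all.2 fun j => eventually_lt_nhds <|
      lt_min (hZ i j).1 (sub_pos.2 (hZ i j).2)).filter_mono nhdsWithin_le_nhds).and
      self_mem_nhdsWithin |>.exists (f := 𝓝[>] 0)
  exact tendsto_atTop_mono (mul_norm_le_dualObjective hδ fun i j => (hδZ i j).le)
    (tendsto_norm_cocompact_atTop.const_mul_atTop hδ)

/-- Coercive on the whole space, the dual objective is coercive on the closed subspace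
`range pairSum`. -/
lemma exists_forall_dualObjective_pairSum_le {Z : ι → ι' → ℝ}
    (hZ : ∀ i j, 0 < Z i j ∧ Z i j < κ) :
    ∃ p₀, ∀ p, dualObjective κ Z (pairSum p₀) ≤ dualObjective κ Z (pairSum p) := by
  have hclosed : IsClosed (Set.range (pairSum : (ι → ℝ) × (ι' → ℝ) →ₗ[ℝ] _)) := by
    rw [← LinearMap.coe_range]
    exact Submodule.closed_of_finiteDimensional _
  obtain ⟨_, ⟨p₀, rfl⟩, hmin⟩ := (continuous_dualObjective Z).continuousOn.exists_isMinOn'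
    hclosed ⟨0, map_zero _⟩
    (((tendsto_dualObjective_cocompact hZ).eventually (eventually_ge_atTop _)).filter_mono
      inf_le_left)
  exact ⟨p₀, fun p => hmin ⟨p, rfl⟩⟩

lemma hasDerivAt_dualObjective_add_smul (Z w v : ι → ι' → ℝ) :
    HasDerivAt (fun ε : ℝ => dualObjective κ Z (w + ε • v))
      (∑ i, ∑ j, (mean κ (exp (w i j)) - Z i j) * v i j) 0 := by
  unfold dualObjective
  refine HasDerivAt.fun_sum fun i _ => HasDerivAt.fun_sum fun j _ => ?_
  have hline : HasDerivAt (fun ε : ℝ => w i j + ε * v i j) (v i j) 0 := by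
    simpa using ((hasDerivAt_id (0 : ℝ)).mul_const (v i j)).const_add (w i j)
  have hcum := (hasDerivAt_cumulant (κ := κ) (w i j)).comp_of_eq 0 hline (by simp)
  simpa [sub_mul, Function.comp_def, Pi.sub_def] using hcum.sub (hline.const_mul (Z i j))

/-- The derivative of the dual objective at `pairSum (s, t)` along `pairSum d` is
`∑ i j, (mean κ (exp (s i + t j)) - Z i j) * (d.1 i + d.2 j)`; take for `d` the indicator of a
row or of a column. -/
lemma hasMargins_mean_of_forall_le {Z : ι → ι' → ℝ} {r : ι → ℝ} {c : ι' → ℝ}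
    (hZ : HasMargins Z r c) {p₀ : (ι → ℝ) × (ι' → ℝ)}
    (hmin : ∀ p, dualObjective κ Z (pairSum p₀) ≤ dualObjective κ Z (pairSum p)) :
    HasMargins (fun i j => mean κ (exp (p₀.1 i + p₀.2 j))) r c := by
  classical
  have hcrit : ∀ d : (ι → ℝ) × (ι' → ℝ),
      ∑ i, ∑ j, (mean κ (exp (p₀.1 i + p₀.2 j)) - Z i j) * (d.1 i + d.2 j) = 0 := fun d => by
    have hloc : IsLocalMin (fun ε : ℝ => dualObjective κ Z (pairSum p₀ + ε • pairSum d)) 0 :=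
      Eventually.of_forall fun ε => by simpa using hmin (p₀ + ε • d)
    simpa using hloc.hasDerivAt_eq_zero (hasDerivAt_dualObjective_add_smul Z _ _)
  refine ⟨fun i => ?_, fun j => ?_⟩
  · simpa [Pi.single_apply, sub_eq_zero, hZ.1 i] using hcrit (Pi.single i 1, 0)
  · simpa [Pi.single_apply, sub_eq_zero, hZ.2 j] using hcrit (0, Pi.single j 1)

lemma sum_Hmax_le_dualObjective (hκ : 0 < κ) {Z : ι → ι' → ℝ}
    (hZ : ∀ i j, 0 ≤ Z i j ∧ Z i j ≤ κ) (w : ι → ι' → ℝ) :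
    ∑ i, ∑ j, Hmax κ (Z i j) ≤ dualObjective κ Z w :=
  sum_le_sum fun i _ => sum_le_sum fun j _ => Hmax_le_cumulant_sub hκ (hZ i j).1 (hZ i j).2 _

lemma dualObjective_mean_exp (hκ : 0 < κ) (w : ι → ι' → ℝ) :
    dualObjective κ (fun i j => mean κ (exp (w i j))) w = ∑ i, ∑ j, Hmax κ (mean κ (exp (w i j))) :=
  sum_congr rfl fun _ _ => sum_congr rfl fun _ _ => (Hmax_mean_exp hκ _).symm

lemma mem_transportPolytope_natCast_iff {m n : ℕ} {R : Fin m → ℕ} {C : Fin n → ℕ}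
    {Z : Fin m → Fin n → ℝ} :
    Z ∈ transportPolytope κ R C ↔
      (∀ i j, 0 ≤ Z i j ∧ Z i j ≤ κ) ∧ HasMargins Z (fun i => R i) (fun j => C j) := by
  simp [transportPolytope, HasMargins, forall_and, and_assoc]

lemma exp_sum_mul_log_eq_monom {k : ℕ} {x : Fin k → ℝ} (hx : ∀ i, 0 < x i) (E : Fin k → ℕ) :
    exp (∑ i, (E i : ℝ) * Real.log (x i)) = monom x E :=
  (exp_sum _ _).trans (prod_congr rfl fun i _ => by rw [exp_nat_mul, exp_log (hx i)])

lemma genFun_div_monom_eq_exp {m n : ℕ} {R : Fin m → ℕ} {C : Fin n → ℕ}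
    {Z : Fin m → Fin n → ℝ} (hZ : HasMargins Z (fun i => R i) (fun j => C j))
    {x : Fin m → ℝ} {y : Fin n → ℝ} (hx : ∀ i, 0 < x i) (hy : ∀ j, 0 < y j) :
    genFun (fun _ _ => κ) x y / (monom x R * monom y C) =
      exp (dualObjective κ Z (pairSum (fun i => Real.log (x i), fun j => Real.log (y j)))) := by
  have hgen : exp (∑ i, ∑ j, cumulant κ (Real.log (x i) + Real.log (y j))) =
      genFun (fun _ _ => κ) x y := by
    refine (exp_sum _ _).trans (prod_congr rfl fun i _ => (exp_sum _ _).trans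
      (prod_congr rfl fun j _ => ?_))
    rw [cumulant, exp_log (partition_pos (exp_pos _).le), exp_add, exp_log (hx i), exp_log (hy j)]
    rfl
  rw [dualObjective_pairSum hZ, exp_sub, exp_sub, hgen, exp_sum_mul_log_eq_monom hx,
    exp_sum_mul_log_eq_monom hy, div_div]

end Duality

theorem genfun_entropy_duality_general {m n : ℕ} (κ : ℕ) (hκ : 0 < κ)
    (R : Fin m → ℕ) (C : Fin n → ℕ)
    (hint : ∃ Z ∈ transportPolytope (κ : ℕ∞) R C,
      ∀ i j, 0 < Z i j ∧ Z i j < (κ : ℝ)) :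
    Real.log (sInf {v : ℝ | ∃ (x : Fin m → ℝ) (y : Fin n → ℝ),
      (∀ i, 0 < x i) ∧ (∀ j, 0 < y j) ∧
      v = genFun (fun _ _ => κ) x y / (monom x R * monom y C)}) =
    sSup {v : ℝ | ∃ Z ∈ transportPolytope (κ : ℕ∞) R C,
      v = ∑ i, ∑ j, Hmax (κ : ℕ∞) (Z i j)} := by
  obtain ⟨Z₀, hZ₀, hint⟩ := hint
  have hmargins := (mem_transportPolytope_natCast_iff.1 hZ₀).2
  obtain ⟨p₀, hmin⟩ := exists_forall_dualObjective_pairSum_le hint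
  have hoptimal : (fun i j => mean κ (exp (p₀.1 i + p₀.2 j))) ∈ transportPolytope κ R C :=
    mem_transportPolytope_natCast_iff.2 ⟨fun i j => ⟨mean_nonneg (exp_pos _).le,
      (mean_lt hκ (exp_pos _).le).le⟩, hasMargins_mean_of_forall_le hmargins hmin⟩
  rw [IsLeast.csInf_eq (a := exp (dualObjective κ Z₀ (pairSum p₀))) ⟨?attained, ?lower⟩,
    IsGreatest.csSup_eq (a := dualObjective κ Z₀ (pairSum p₀)) ⟨?achieved, ?upper⟩, log_exp]
  case attained =>
    exact ⟨fun i => exp (p₀.1 i), fun j => exp (p₀.2 j), fun _ => exp_pos _, fun _ => exp_pos _,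
      by rw [genFun_div_monom_eq_exp hmargins (fun _ => exp_pos _) (fun _ => exp_pos _)]; simp⟩
  case lower =>
    rintro _ ⟨x, y, hx, hy, rfl⟩
    rw [genFun_div_monom_eq_exp hmargins hx hy]
    exact exp_le_exp.2 (hmin _)
  case achieved =>
    refine ⟨_, hoptimal, ?_⟩
    rw [dualObjective_pairSum_congr hmargins (mem_transportPolytope_natCast_iff.1 hoptimal).2]
    exact dualObjective_mean_exp hκ _
  case upper =>
    rintro _ ⟨Z, hZ, rfl⟩
    rw [dualObjective_pairSum_congr hmargins (mem_transportPolytope_natCast_iff.1 hZ).2]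
    exact sum_Hmax_le_dualObjective hκ (mem_transportPolytope_natCast_iff.1 hZ).1 _

/-- **Lemma (duality).** For constant bound `κ`, the log of the infimum of
`G(x,y)/(x^R y^C)` equals the maximum of `∑_{ij} H^max_κ(z_{ij})` over `Π_κ(R,C)`. -/
theorem genfun_entropy_duality {m n : ℕ} (κ : ℕ) (hκ : 0 < κ)
    (R : Fin m → ℕ) (C : Fin n → ℕ) (hN : ∑ i, R i = ∑ j, C j)
    (hint : ∃ Z ∈ transportPolytope (κ : ℕ∞) R C,
      ∀ i j, 0 < Z i j ∧ Z i j < (κ : ℝ)) :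
    Real.log (sInf {v : ℝ | ∃ (x : Fin m → ℝ) (y : Fin n → ℝ),
      (∀ i, 0 < x i) ∧ (∀ j, 0 < y j) ∧
      v = genFun (fun _ _ => κ) x y / (monom x R * monom y C)}) =
    sSup {v : ℝ | ∃ Z ∈ transportPolytope (κ : ℕ∞) R C,
      v = ∑ i, ∑ j, Hmax (κ : ℕ∞) (Z i j)} :=
  genfun_entropy_duality_general κ hκ R C hint
end
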